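/- Let σ ∈ {-1,+1}^V, let x ∈ V, and let σ^x denote the configuration obtained from σ by flipping only the spin at x. Then for every y ∈ V with y ≠ x, the ε-SCA local transition probabilities satisfy |p̃_{y,ε}(+1 | σ) − p̃_{y,ε}(+1 | σ^x)| ≤ ε · tanh(β |J_{x,y}| / 2). -/

import Mathlib

open Real Finset

variable {V : Type*}

/-- The real value of a Boolean spin: `true ↦ +1`, `false ↦ -1`. -/
def sp (b : Bool) : ℝ := if b then 1 else -1

/-- The cavity field `h̃_x(σ) = ∑_y J_{x,y} σ_y + h_x`. -/
noncomputable def cavity [Fintype V] (J : V → V → ℝ) (h : V → ℝ) (σ : V → Bool) (x : V) : ℝ :=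
  (∑ y, J x y * sp (σ y)) + h x

/-- The pinning-free local probability
`p_{x,0}(s|σ) = e^{(β/2) h̃_x(σ) s} / (2 cosh((β/2) h̃_x(σ)))`. -/
noncomputable def plocal [Fintype V] (J : V → V → ℝ) (h : V → ℝ) (β : ℝ)
    (σ : V → Bool) (x : V) (s : Bool) : ℝ :=
  Real.exp ((β / 2) * cavity J h σ x * sp s) / (2 * Real.cosh ((β / 2) * cavity J h σ x))

/-- The ε-SCA local transition probability
`p̃_{x,ε}(s|σ) = (1-ε) δ_{σ_x,s} + ε p_{x,0}(s|σ)`. -/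
noncomputable def ptilde [Fintype V] (J : V → V → ℝ) (h : V → ℝ) (β ε : ℝ)
    (σ : V → Bool) (x : V) (s : Bool) : ℝ :=
  (1 - ε) * (if σ x = s then 1 else 0) + ε * plocal J h β σ x s

/-!
Since `σ^x` agrees with `σ` at `y`, the lazy parts of the two transition probabilities cancel, and
`p_{y,0}(+1|σ) = (1 + tanh t) / 2` with `t = (β/2) h̃_y(σ)`; flipping `σ_x` shifts `t` by
`± β J_{x,y}`. The bound then follows from `|tanh a - tanh b| ≤ 2 tanh (|a - b| / 2)`, which holds
because `tanh a - tanh b = sinh (a - b) / (cosh a cosh b)` and `cosh a cosh b ≥ cosh² ((a - b) / 2)`.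
-/

lemma sp_not (b : Bool) : sp (!b) = -sp b := by
  cases b <;> simp [sp]

lemma abs_sp (b : Bool) : |sp b| = 1 := by
  cases b <;> simp [sp]

section Tanh

lemma cosh_half_sub_sq_le_cosh_mul_cosh (a b : ℝ) : cosh ((a - b) / 2) ^ 2 ≤ cosh a * cosh b := by
  have hprod : cosh a * cosh b = (cosh (a + b) + cosh (a - b)) / 2 := by
    rw [cosh_add, cosh_sub]; ring
  have hdouble : cosh (a - b) = 2 * cosh ((a - b) / 2) ^ 2 - 1 := by
    have h2 := cosh_two_mul ((a - b) / 2)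
    rw [mul_div_cancel₀ _ two_ne_zero] at h2
    linarith [cosh_sq ((a - b) / 2)]
  linarith [one_le_cosh (a + b)]

lemma tanh_sub_tanh (a b : ℝ) : tanh a - tanh b = sinh (a - b) / (cosh a * cosh b) := by
  rw [tanh_eq_sinh_div_cosh, tanh_eq_sinh_div_cosh,
    div_sub_div _ _ (cosh_pos a).ne' (cosh_pos b).ne', sinh_sub]

lemma abs_tanh_sub_tanh_le (a b : ℝ) : |tanh a - tanh b| ≤ 2 * tanh (|a - b| / 2) := by
  set d := |a - b| / 2
  have hd : 0 ≤ d := by positivity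
  have hsinh : |sinh (a - b)| = 2 * sinh d * cosh d := by
    rw [abs_sinh, ← sinh_two_mul, mul_div_cancel₀ _ two_ne_zero]
  have hcosh : cosh d ^ 2 ≤ cosh a * cosh b := by
    rw [show d = |(a - b) / 2| by rw [abs_div, abs_two], cosh_abs]
    exact cosh_half_sub_sq_le_cosh_mul_cosh a b
  rw [tanh_sub_tanh, abs_div, abs_of_pos (by positivity : 0 < cosh a * cosh b), hsinh]
  calc 2 * sinh d * cosh d / (cosh a * cosh b) ≤ 2 * sinh d * cosh d / cosh d ^ 2 := by
        have := sinh_nonneg_iff.2 hd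
        gcongr
    _ = 2 * tanh d := by
        rw [tanh_eq_sinh_div_cosh]; field_simp

end Tanh

section Model

variable [Fintype V] (J : V → V → ℝ) (h : V → ℝ)

lemma cavity_update [DecidableEq V] (σ : V → Bool) (x y : V) (b : Bool) :
    cavity J h (Function.update σ x b) y = cavity J h σ y + J y x * (sp b - sp (σ x)) := by
  have hterm : ∀ z, J y z * sp (Function.update σ x b z) =
      J y z * sp (σ z) + if z = x then J y x * (sp b - sp (σ x)) else 0 := by
    intro z
    rcases eq_or_ne z x with rfl | hz
    · simp only [Function.update_self, if_true]; ring
    · simp [hz]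
  simp only [cavity, hterm, Finset.sum_add_distrib, Finset.sum_ite_eq', Finset.mem_univ, if_true]
  ring

lemma plocal_true (β : ℝ) (σ : V → Bool) (y : V) :
    plocal J h β σ y true = (1 + tanh (β / 2 * cavity J h σ y)) / 2 := by
  rw [plocal, show sp true = 1 from rfl, mul_one]
  generalize β / 2 * cavity J h σ y = t
  have hc := cosh_pos t
  rw [tanh_eq_sinh_div_cosh, ← cosh_add_sinh t]
  field_simp

lemma ptilde_true_sub_ptilde_true (β ε : ℝ) {σ σ' : V → Bool} {y : V} (hy : σ' y = σ y) :
    ptilde J h β ε σ y true - ptilde J h β ε σ' y true =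
      ε / 2 * (tanh (β / 2 * cavity J h σ y) - tanh (β / 2 * cavity J h σ' y)) := by
  rw [ptilde, ptilde, plocal_true, plocal_true, hy]
  ring

end Model

theorem abs_ptilde_sub_ptilde_flip_le [Fintype V] [DecidableEq V]
    (J : V → V → ℝ) (h : V → ℝ)
    (hsym : ∀ x y, J x y = J y x)
    (β : ℝ) (hβ : 0 ≤ β) (ε : ℝ) (hε : ε ∈ Set.Ioc (0 : ℝ) 1)
    (σ : V → Bool) (x y : V) (hyx : y ≠ x) :
    |ptilde J h β ε σ y true - ptilde J h β ε (Function.update σ x (!σ x)) y true| ≤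
      ε * Real.tanh (β * |J x y| / 2) := by
  have hfield_gap :
      β / 2 * cavity J h σ y - β / 2 * cavity J h (Function.update σ x (!σ x)) y =
        β * J x y * sp (σ x) := by
    rw [cavity_update, sp_not, hsym y x]
    ring
  have hε2 : 0 ≤ ε / 2 := by linarith [hε.1]
  rw [ptilde_true_sub_ptilde_true J h β ε (Function.update_of_ne hyx _ _), abs_mul,
    abs_of_nonneg hε2]
  calc ε / 2 * |_ - _| ≤ ε / 2 * (2 * tanh (|β * J x y * sp (σ x)| / 2)) := by
        rw [← hfield_gap]
        exact mul_le_mul_of_nonneg_left (abs_tanh_sub_tanh_le _ _) hε2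
    _ = ε * tanh (β * |J x y| / 2) := by
        rw [abs_mul, abs_mul, abs_sp, abs_of_nonneg hβ, mul_one]
        ring
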